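/- arXiv:1506.07707 — 7 statements merged into one kernel-verified Lean document; each statement's English description precedes it below -/
import Mathlib

section
/- Let 𝔸 and 𝔹 be categories with finite limits, V : 𝔸 → 𝔹 a faithful functor preserving finite limits, and p : V×V×V → V a V-Mal'tsev operation. Then 𝔸 is a weakly Mal'tsev category: for every diagram f : A → B, r : B → A, g : C → B, s : B → C in 𝔸 with f∘r = 1_B = g∘s, the induced morphisms e₁ = ⟨1_A, s∘f⟩ : A → A×_B C and e₂ = ⟨r∘g, 1_C⟩ : C → A×_B C into the pullback of f along g are jointly epimorphic, i.e. for any φ, φ' : A×_B C → D, if φ∘e₁ = φ'∘e₁ and φ∘e₂ = φ'∘e₂ then φ = φ'. -/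
/-!
Since `V` preserves the pullback `P` of `f` and `g`, the projections `V π₁`, `V π₂` are jointly
monic, and the Mal'tsev identities give `𝟙 (V P) = p_P ∘ ⟨V(π₁ e₁), V(π₁ f s e₂), V(π₂ e₂)⟩`.
By naturality of `p`, every `V ψ` with `ψ : P ⟶ D` is then `p_D` applied to `V(π₁ e₁ ψ)`,
`V(π₁ f s e₂ ψ)` and `V(π₂ e₂ ψ)`, which only depend on `e₁ ≫ ψ` and `e₂ ≫ ψ`;
faithfulness of `V` concludes.
-/

open CategoryTheory CategoryTheory.Limits

/-- A `V`-Mal'tsev operation: a natural transformation `p : V×V×V → V` whose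
components `p_A : V(A) × V(A) × V(A) ⟶ V(A)` satisfy
`p_A ∘ ⟨x,y,y⟩ = x = p_A ∘ ⟨y,y,x⟩`. -/
structure VMaltsevOperation {𝔸 𝔹 : Type*} [Category 𝔸] [Category 𝔹]
    [HasFiniteLimits 𝔹] (V : 𝔸 ⥤ 𝔹) where
  app : ∀ A : 𝔸, (V.obj A ⨯ V.obj A ⨯ V.obj A) ⟶ V.obj A
  naturality : ∀ {A A' : 𝔸} (f : A ⟶ A'),
    prod.map (V.map f) (prod.map (V.map f) (V.map f)) ≫ app A' = app A ≫ V.map f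
  maltsev_left : ∀ {T : 𝔹} {A : 𝔸} (x y : T ⟶ V.obj A),
    prod.lift x (prod.lift y y) ≫ app A = x
  maltsev_right : ∀ {T : 𝔹} {A : 𝔸} (x y : T ⟶ V.obj A),
    prod.lift y (prod.lift y x) ≫ app A = x

namespace VMaltsevOperation

variable {𝔸 𝔹 : Type*} [Category 𝔸] [Category 𝔹] [HasFiniteLimits 𝔹] {V : 𝔸 ⥤ 𝔹}
  (p : VMaltsevOperation V)

theorem lift_comp_app_comp_map {T : 𝔹} {X Y : 𝔸} (x y z : T ⟶ V.obj X) (h : X ⟶ Y) :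
    prod.lift x (prod.lift y z) ≫ p.app X ≫ V.map h =
      prod.lift (x ≫ V.map h) (prod.lift (y ≫ V.map h) (z ≫ V.map h)) ≫ p.app Y := by
  rw [← p.naturality, prod.lift_map_assoc, prod.lift_map]

theorem lift_map_comp_app_comp_map {W X Y : 𝔸} (a b c : W ⟶ X) (h : X ⟶ Y) :
    prod.lift (V.map a) (prod.lift (V.map b) (V.map c)) ≫ p.app X ≫ V.map h =
      prod.lift (V.map (a ≫ h)) (prod.lift (V.map (b ≫ h)) (V.map (c ≫ h))) ≫ p.app Y := by
  simp only [lift_comp_app_comp_map, V.map_comp]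

theorem hom_ext_of_lift_map_comp_app_eq_id [V.Faithful] {X D : 𝔸} {a b c : X ⟶ X}
    (hid : prod.lift (V.map a) (prod.lift (V.map b) (V.map c)) ≫ p.app X = 𝟙 _)
    {ψ ψ' : X ⟶ D} (ha : a ≫ ψ = a ≫ ψ') (hb : b ≫ ψ = b ≫ ψ') (hc : c ≫ ψ = c ≫ ψ') :
    ψ = ψ' := by
  apply V.map_injective
  calc V.map ψ = prod.lift (V.map a) (prod.lift (V.map b) (V.map c)) ≫ p.app X ≫ V.map ψ := by
        rw [← Category.assoc, hid, Category.id_comp]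
    _ = prod.lift (V.map a) (prod.lift (V.map b) (V.map c)) ≫ p.app X ≫ V.map ψ' := by
        rw [lift_map_comp_app_comp_map, lift_map_comp_app_comp_map, ha, hb, hc]
    _ = V.map ψ' := by rw [← Category.assoc, hid, Category.id_comp]

theorem lift_map_pullback_comp_app_eq_id {A B C : 𝔸} {f : A ⟶ B} {r : B ⟶ A} {g : C ⟶ B}
    {s : B ⟶ C} [HasPullback f g] [PreservesLimit (cospan f g) V] (hs : s ≫ g = 𝟙 B)
    {e₁ : A ⟶ pullback f g}
    (he₁₁ : e₁ ≫ pullback.fst f g = 𝟙 A) (he₁₂ : e₁ ≫ pullback.snd f g = f ≫ s)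
    {e₂ : C ⟶ pullback f g}
    (he₂₁ : e₂ ≫ pullback.fst f g = g ≫ r) (he₂₂ : e₂ ≫ pullback.snd f g = 𝟙 C) :
    prod.lift (V.map (pullback.fst f g ≫ e₁))
      (prod.lift (V.map (pullback.fst f g ≫ f ≫ s ≫ e₂)) (V.map (pullback.snd f g ≫ e₂))) ≫
        p.app (pullback f g) = 𝟙 _ := by
  refine ((IsPullback.of_hasPullback f g).map V).hom_ext ?_ ?_
  · rw [Category.assoc, lift_map_comp_app_comp_map, Category.id_comp]
    simp only [Category.assoc, he₁₁, he₂₁, reassoc_of% hs, Category.comp_id]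
    rw [← pullback.condition_assoc, p.maltsev_left]
  · rw [Category.assoc, lift_map_comp_app_comp_map, Category.id_comp]
    simp only [Category.assoc, he₁₂, he₂₂, Category.comp_id]
    rw [p.maltsev_right]

end VMaltsevOperation

theorem weakly_maltsev_of_VMaltsevOperation_general
    {𝔸 𝔹 : Type*} [Category 𝔸] [Category 𝔹]
    [HasFiniteLimits 𝔸] [HasFiniteLimits 𝔹]
    (V : 𝔸 ⥤ 𝔹) [V.Faithful] [PreservesFiniteLimits V]
    (p : VMaltsevOperation V)
    {A B C D : 𝔸} (f : A ⟶ B) (r : B ⟶ A) (g : C ⟶ B) (s : B ⟶ C)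
    (hs : s ≫ g = 𝟙 B)
    (e₁ : A ⟶ pullback f g)
    (he₁₁ : e₁ ≫ pullback.fst f g = 𝟙 A) (he₁₂ : e₁ ≫ pullback.snd f g = f ≫ s)
    (e₂ : C ⟶ pullback f g)
    (he₂₁ : e₂ ≫ pullback.fst f g = g ≫ r) (he₂₂ : e₂ ≫ pullback.snd f g = 𝟙 C)
    (φ φ' : pullback f g ⟶ D)
    (h₁ : e₁ ≫ φ = e₁ ≫ φ') (h₂ : e₂ ≫ φ = e₂ ≫ φ') :
    φ = φ' := by
  refine p.hom_ext_of_lift_map_comp_app_eq_id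
    (p.lift_map_pullback_comp_app_eq_id hs he₁₁ he₁₂ he₂₁ he₂₂) ?_ ?_ ?_
  · rw [Category.assoc, h₁, Category.assoc]
  · simp only [Category.assoc, h₂]
  · rw [Category.assoc, h₂, Category.assoc]

/-- If `𝔸` admits a `V`-Mal'tsev operation for a faithful finite-limit-preserving
functor `V`, then `𝔸` is weakly Mal'tsev: for any split pullback diagram the pair
`(e₁, e₂)` of induced morphisms into the pullback is jointly epimorphic. -/
theorem weakly_maltsev_of_VMaltsevOperation
    {𝔸 𝔹 : Type*} [Category 𝔸] [Category 𝔹]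
    [HasFiniteLimits 𝔸] [HasFiniteLimits 𝔹]
    (V : 𝔸 ⥤ 𝔹) [V.Faithful] [PreservesFiniteLimits V]
    (p : VMaltsevOperation V)
    {A B C D : 𝔸} (f : A ⟶ B) (r : B ⟶ A) (g : C ⟶ B) (s : B ⟶ C)
    (hr : r ≫ f = 𝟙 B) (hs : s ≫ g = 𝟙 B)
    (e₁ : A ⟶ pullback f g)
    (he₁₁ : e₁ ≫ pullback.fst f g = 𝟙 A) (he₁₂ : e₁ ≫ pullback.snd f g = f ≫ s)
    (e₂ : C ⟶ pullback f g)
    (he₂₁ : e₂ ≫ pullback.fst f g = g ≫ r) (he₂₂ : e₂ ≫ pullback.snd f g = 𝟙 C)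
    (φ φ' : pullback f g ⟶ D)
    (h₁ : e₁ ≫ φ = e₁ ≫ φ') (h₂ : e₂ ≫ φ = e₂ ≫ φ') :
    φ = φ' :=
  weakly_maltsev_of_VMaltsevOperation_general V p f r g s hs e₁ he₁₁ he₁₂ e₂ he₂₁ he₂₂ φ φ' h₁ h₂
end

section
/- Let 𝔸 and 𝔹 be categories with finite limits, V : 𝔸 → 𝔹 a faithful functor preserving finite limits, and p : V×V×V → V a V-Mal'tsev operation. Given a diagram in 𝔸 consisting of f : A → B, r : B → A, g : C → B, s : B → C with f∘r = 1_B = g∘s, and morphisms α : A → D, β : B → D, γ : C → D with α∘r = β = γ∘s, there exists at most one morphism φ : A×_B C → D (where A×_B C is the pullback of f along g) such that φ∘⟨1_A, s∘f⟩ = α and φ∘⟨r∘g, 1_C⟩ = γ. -/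
/-!
A generalized element of `V (A ×_B C)` is a pair `(a, c)` with `f a = g c`, and componentwise
`p((a, s f a), (r f a, s f a), (r g c, c)) = (p(a, r f a, r f a), p(s f a, s f a, c)) = (a, c)`.
So `p` writes the identity of `V (A ×_B C)` through `V e₁` and `V e₂` (the first two arguments
factor through `e₁`, the third through `e₂`), and by naturality of `p` and faithfulness of `V` a
morphism out of the pullback is determined by its composites with `e₁` and `e₂`.
-/

open CategoryTheory CategoryTheory.Limits

namespace VMaltsevOperation

variable {𝔸 𝔹 : Type*} [Category 𝔸] [Category 𝔹] [HasFiniteLimits 𝔹] {V : 𝔸 ⥤ 𝔹}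
  (p : VMaltsevOperation V)

theorem lift_app_map {T : 𝔹} {A A' : 𝔸} (x y z : T ⟶ V.obj A) (h : A ⟶ A') :
    prod.lift x (prod.lift y z) ≫ p.app A ≫ V.map h =
      prod.lift (x ≫ V.map h) (prod.lift (y ≫ V.map h) (z ≫ V.map h)) ≫ p.app A' := by
  rw [← p.naturality, prod.lift_map_assoc, prod.lift_map]

theorem ext_of_lift_app_eq_id [V.Faithful] {P D : 𝔸} {a b c : P ⟶ P}
    (hid : prod.lift (V.map a) (prod.lift (V.map b) (V.map c)) ≫ p.app P = 𝟙 (V.obj P))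
    {ψ ψ' : P ⟶ D} (ha : a ≫ ψ = a ≫ ψ') (hb : b ≫ ψ = b ≫ ψ') (hc : c ≫ ψ = c ≫ ψ') :
    ψ = ψ' := by
  apply V.map_injective
  rw [← Category.id_comp (V.map ψ), ← Category.id_comp (V.map ψ'), ← hid,
    Category.assoc, Category.assoc, lift_app_map, lift_app_map]
  simp only [← V.map_comp, ha, hb, hc]

end VMaltsevOperation

section SplitPullback

variable {𝔸 𝔹 : Type*} [Category 𝔸] [Category 𝔹] [HasFiniteLimits 𝔸] [HasFiniteLimits 𝔹]
  {V : 𝔸 ⥤ 𝔹} [PreservesFiniteLimits V] (p : VMaltsevOperation V)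
  {A B C : 𝔸} {f : A ⟶ B} {r : B ⟶ A} {g : C ⟶ B} {s : B ⟶ C}

theorem VMaltsevOperation.lift_app_eq_id_of_split_pullback (hr : r ≫ f = 𝟙 B)
    {e₁ : A ⟶ pullback f g}
    (he₁₁ : e₁ ≫ pullback.fst f g = 𝟙 A) (he₁₂ : e₁ ≫ pullback.snd f g = f ≫ s)
    {e₂ : C ⟶ pullback f g}
    (he₂₁ : e₂ ≫ pullback.fst f g = g ≫ r) (he₂₂ : e₂ ≫ pullback.snd f g = 𝟙 C) :
    prod.lift (V.map (pullback.fst f g ≫ e₁))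
        (prod.lift (V.map (pullback.fst f g ≫ f ≫ r ≫ e₁)) (V.map (pullback.snd f g ≫ e₂))) ≫
      p.app (pullback f g) = 𝟙 _ := by
  apply PullbackCone.IsLimit.hom_ext (isLimitOfHasPullbackOfPreservesLimit V f g)
  · have hsnd : pullback.snd f g ≫ e₂ ≫ pullback.fst f g = pullback.fst f g ≫ f ≫ r := by
      rw [he₂₁, pullback.condition_assoc]
    change _ ≫ V.map (pullback.fst f g) = 𝟙 _ ≫ V.map (pullback.fst f g)
    simp only [Category.assoc, p.lift_app_map, ← V.map_comp, he₁₁, hsnd, Category.comp_id,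
      p.maltsev_left, Category.id_comp]
  · have hfst : pullback.fst f g ≫ f ≫ r ≫ e₁ ≫ pullback.snd f g =
        pullback.fst f g ≫ e₁ ≫ pullback.snd f g := by
      rw [he₁₂, reassoc_of% hr]
    change _ ≫ V.map (pullback.snd f g) = 𝟙 _ ≫ V.map (pullback.snd f g)
    simp only [Category.assoc, p.lift_app_map, ← V.map_comp, hfst, he₂₂, Category.comp_id,
      p.maltsev_right, Category.id_comp]

end SplitPullback

theorem unique_morphism_from_pullback_general
    {𝔸 𝔹 : Type*} [Category 𝔸] [Category 𝔹]
    [HasFiniteLimits 𝔸] [HasFiniteLimits 𝔹]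
    (V : 𝔸 ⥤ 𝔹) [V.Faithful] [PreservesFiniteLimits V]
    (p : VMaltsevOperation V)
    {A B C D : 𝔸} (f : A ⟶ B) (r : B ⟶ A) (g : C ⟶ B) (s : B ⟶ C)
    (hr : r ≫ f = 𝟙 B)
    (α : A ⟶ D) (γ : C ⟶ D)
    (e₁ : A ⟶ pullback f g)
    (he₁₁ : e₁ ≫ pullback.fst f g = 𝟙 A) (he₁₂ : e₁ ≫ pullback.snd f g = f ≫ s)
    (e₂ : C ⟶ pullback f g)
    (he₂₁ : e₂ ≫ pullback.fst f g = g ≫ r) (he₂₂ : e₂ ≫ pullback.snd f g = 𝟙 C)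
    (φ φ' : pullback f g ⟶ D)
    (hφ₁ : e₁ ≫ φ = α) (hφ₂ : e₂ ≫ φ = γ)
    (hφ'₁ : e₁ ≫ φ' = α) (hφ'₂ : e₂ ≫ φ' = γ) :
    φ = φ' :=
  p.ext_of_lift_app_eq_id (p.lift_app_eq_id_of_split_pullback hr he₁₁ he₁₂ he₂₁ he₂₂)
    (by rw [Category.assoc, Category.assoc, hφ₁, hφ'₁])
    (by simp only [Category.assoc, hφ₁, hφ'₁])
    (by rw [Category.assoc, Category.assoc, hφ₂, hφ'₂])

/-- Given a split pullback diagram and a compatible cospan `α, β, γ`, there is at most one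
morphism `φ : A ×_B C ⟶ D` with `φ ∘ e₁ = α` and `φ ∘ e₂ = γ`. -/
theorem unique_morphism_from_pullback
    {𝔸 𝔹 : Type*} [Category 𝔸] [Category 𝔹]
    [HasFiniteLimits 𝔸] [HasFiniteLimits 𝔹]
    (V : 𝔸 ⥤ 𝔹) [V.Faithful] [PreservesFiniteLimits V]
    (p : VMaltsevOperation V)
    {A B C D : 𝔸} (f : A ⟶ B) (r : B ⟶ A) (g : C ⟶ B) (s : B ⟶ C)
    (hr : r ≫ f = 𝟙 B) (hs : s ≫ g = 𝟙 B)
    (α : A ⟶ D) (β : B ⟶ D) (γ : C ⟶ D)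
    (hα : r ≫ α = β) (hγ : s ≫ γ = β)
    (e₁ : A ⟶ pullback f g)
    (he₁₁ : e₁ ≫ pullback.fst f g = 𝟙 A) (he₁₂ : e₁ ≫ pullback.snd f g = f ≫ s)
    (e₂ : C ⟶ pullback f g)
    (he₂₁ : e₂ ≫ pullback.fst f g = g ≫ r) (he₂₂ : e₂ ≫ pullback.snd f g = 𝟙 C)
    (φ φ' : pullback f g ⟶ D)
    (hφ₁ : e₁ ≫ φ = α) (hφ₂ : e₂ ≫ φ = γ)
    (hφ'₁ : e₁ ≫ φ' = α) (hφ'₂ : e₂ ≫ φ' = γ) :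
    φ = φ' :=
  unique_morphism_from_pullback_general V p f r g s hr α γ e₁ he₁₁ he₁₂ e₂ he₂₁ he₂₂ φ φ' hφ₁ hφ₂
    hφ'₁ hφ'₂
end

section
/- Let 𝔸 and 𝔹 be categories with finite limits, V : 𝔸 → 𝔹 a faithful functor preserving finite limits, and p : V×V×V → V a V-Mal'tsev operation. Let A be an object of 𝔸 with endomorphisms s, t : A → A satisfying s∘t = t and t∘s = s, for which property (P1) holds. Then for every object X of 𝔸 and morphisms x₁,x₂,x₃,y₁,y₂,y₃,z₁,z₂,z₃ : X → A satisfying s∘x₁ = s∘x₂ = s∘y₂ = s∘y₁, t∘x₂ = t∘x₃, t∘y₁ = t∘z₁, s∘x₃ = s∘y₃, s∘z₁ = s∘z₂, and t∘y₃ = t∘z₃ = t∘y₂ = t∘z₂, the associativity equation holds: p_A⟨p_A⟨Vx₁,Vx₂,Vx₃⟩, p_A⟨Vy₁,Vy₂,Vy₃⟩, p_A⟨Vz₁,Vz₂,Vz₃⟩⟩ = p_A⟨p_A⟨Vx₁,Vy₁,Vz₁⟩, p_A⟨Vx₂,Vy₂,Vz₂⟩, p_A⟨Vx₃,Vy₃,Vz₃⟩⟩.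 -/
/-!
Property (P1) applied to the three projections of the object `P` of compatible triples yields
`q : P ⟶ A` with `V q = p ∘ ⟨Vπ₁, Vπ₂, Vπ₃⟩`. The rows of the 3×3 array are compatible triples,
so applying `p` to a row is postcomposition with `V q`, and naturality of `p` at `q` interchanges
the two ways of evaluating the array.
-/

open CategoryTheory CategoryTheory.Limits

/-- The Mal'tsev operation applied to three generalized elements `x, y, z : T ⟶ V(A)`:
`p_A ∘ ⟨x, y, z⟩`. -/
noncomputable def VMaltsevOperation.papp {𝔸 𝔹 : Type*} [Category 𝔸] [Category 𝔹]
    [HasFiniteLimits 𝔹] {V : 𝔸 ⥤ 𝔹} (p : VMaltsevOperation V)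
    {T : 𝔹} {A : 𝔸} (x y z : T ⟶ V.obj A) : T ⟶ V.obj A :=
  prod.lift x (prod.lift y z) ≫ p.app A

/-- Property (P1) for a triple `(A, s, t)`: for all `α, β, γ : X ⟶ A` with
`s∘α = s∘β` and `t∘β = t∘γ` there is a unique `φ : X ⟶ A` with
`V(φ) = p_A ∘ ⟨V(α), V(β), V(γ)⟩`. -/
def PropertyP1 {𝔸 𝔹 : Type*} [Category 𝔸] [Category 𝔹]
    [HasFiniteLimits 𝔹] {V : 𝔸 ⥤ 𝔹} (p : VMaltsevOperation V)
    {A : 𝔸} (s t : A ⟶ A) : Prop :=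
  ∀ (X : 𝔸) (α β γ : X ⟶ A), α ≫ s = β ≫ s → β ≫ t = γ ≫ t →
    ∃! φ : X ⟶ A, V.map φ = p.papp (V.map α) (V.map β) (V.map γ)

namespace VMaltsevOperation

variable {𝔸 𝔹 : Type*} [Category 𝔸] [Category 𝔹] [HasFiniteLimits 𝔹] {V : 𝔸 ⥤ 𝔹}
  (p : VMaltsevOperation V)

lemma comp_papp {T T' : 𝔹} {A : 𝔸} (g : T' ⟶ T) (x y z : T ⟶ V.obj A) :
    g ≫ p.papp x y z = p.papp (g ≫ x) (g ≫ y) (g ≫ z) := by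
  rw [papp, papp, ← Category.assoc, prod.comp_lift, prod.comp_lift]

lemma papp_comp_map {T : 𝔹} {A A' : 𝔸} (f : A ⟶ A') (x y z : T ⟶ V.obj A) :
    p.papp x y z ≫ V.map f = p.papp (x ≫ V.map f) (y ≫ V.map f) (z ≫ V.map f) := by
  rw [papp, Category.assoc, ← p.naturality f, papp, ← Category.assoc, prod.lift_map,
    prod.lift_map]

theorem papp_papp_interchange {P A : 𝔸} {π₁ π₂ π₃ q : P ⟶ A}
    (hq : V.map q = p.papp (V.map π₁) (V.map π₂) (V.map π₃)) {T : 𝔹} (u v w : T ⟶ V.obj P) :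
    p.papp (p.papp (u ≫ V.map π₁) (u ≫ V.map π₂) (u ≫ V.map π₃))
        (p.papp (v ≫ V.map π₁) (v ≫ V.map π₂) (v ≫ V.map π₃))
        (p.papp (w ≫ V.map π₁) (w ≫ V.map π₂) (w ≫ V.map π₃)) =
      p.papp (p.papp (u ≫ V.map π₁) (v ≫ V.map π₁) (w ≫ V.map π₁))
        (p.papp (u ≫ V.map π₂) (v ≫ V.map π₂) (w ≫ V.map π₂))
        (p.papp (u ≫ V.map π₃) (v ≫ V.map π₃) (w ≫ V.map π₃)) :=
  calc _ = p.papp (u ≫ V.map q) (v ≫ V.map q) (w ≫ V.map q) := by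
        rw [hq, p.comp_papp, p.comp_papp, p.comp_papp]
    _ = p.papp u v w ≫ V.map q := (p.papp_comp_map q u v w).symm
    _ = _ := by
        rw [hq, p.comp_papp, p.papp_comp_map, p.papp_comp_map, p.papp_comp_map]

end VMaltsevOperation

namespace CompatibleTriples

variable {𝔸 : Type*} [Category 𝔸] [HasPullbacks 𝔸] {A : 𝔸} (s t : A ⟶ A)

/-- The object of triples `(a, b, c)` with `s a = s b` and `t b = t c`. -/
noncomputable abbrev obj : 𝔸 := pullback (pullback.snd s s ≫ t) t

noncomputable def π₁ : obj s t ⟶ A := pullback.fst _ _ ≫ pullback.fst s s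

noncomputable def π₂ : obj s t ⟶ A := pullback.fst _ _ ≫ pullback.snd s s

noncomputable def π₃ : obj s t ⟶ A := pullback.snd _ _

lemma π₁_comp : π₁ s t ≫ s = π₂ s t ≫ s := by
  simp only [π₁, π₂, Category.assoc, pullback.condition]

lemma π₂_comp : π₂ s t ≫ t = π₃ s t ≫ t := by
  simp only [π₂, π₃, Category.assoc, pullback.condition]

variable {s t} {X : 𝔸} (a b c : X ⟶ A) (hab : a ≫ s = b ≫ s) (hbc : b ≫ t = c ≫ t)

noncomputable def lift : X ⟶ obj s t :=
  pullback.lift (pullback.lift a b hab) c (by rw [pullback.lift_snd_assoc, hbc])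

@[simp]
lemma lift_π₁ : lift a b c hab hbc ≫ π₁ s t = a := by
  simp only [lift, π₁, pullback.lift_fst_assoc, pullback.lift_fst]

@[simp]
lemma lift_π₂ : lift a b c hab hbc ≫ π₂ s t = b := by
  simp only [lift, π₂, pullback.lift_fst_assoc, pullback.lift_snd]

@[simp]
lemma lift_π₃ : lift a b c hab hbc ≫ π₃ s t = c := by
  simp only [lift, π₃, pullback.lift_snd]

end CompatibleTriples

open CompatibleTriples in
lemma PropertyP1.exists_map_eq_papp_π {𝔸 𝔹 : Type*} [Category 𝔸] [Category 𝔹]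
    [HasPullbacks 𝔸] [HasFiniteLimits 𝔹] {V : 𝔸 ⥤ 𝔹} {p : VMaltsevOperation V}
    {A : 𝔸} {s t : A ⟶ A} (hP1 : PropertyP1 p s t) :
    ∃ q : obj s t ⟶ A,
      V.map q = p.papp (V.map (π₁ s t)) (V.map (π₂ s t)) (V.map (π₃ s t)) :=
  (hP1 _ _ _ _ (π₁_comp s t) (π₂_comp s t)).exists

theorem maltsev_assoc_general
    {𝔸 𝔹 : Type*} [Category 𝔸] [Category 𝔹]
    [HasFiniteLimits 𝔸] [HasFiniteLimits 𝔹]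
    (V : 𝔸 ⥤ 𝔹)
    (p : VMaltsevOperation V)
    {A : 𝔸} (s t : A ⟶ A)
    (hP1 : PropertyP1 p s t)
    {X : 𝔸} (x₁ x₂ x₃ y₁ y₂ y₃ z₁ z₂ z₃ : X ⟶ A)
    (h1 : x₁ ≫ s = x₂ ≫ s) (h1'' : y₂ ≫ s = y₁ ≫ s)
    (h2 : x₂ ≫ t = x₃ ≫ t)
    (h5 : z₁ ≫ s = z₂ ≫ s)
    (h6 : y₃ ≫ t = z₃ ≫ t) (h6' : z₃ ≫ t = y₂ ≫ t) (h6'' : y₂ ≫ t = z₂ ≫ t) :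
    p.papp (p.papp (V.map x₁) (V.map x₂) (V.map x₃))
        (p.papp (V.map y₁) (V.map y₂) (V.map y₃))
        (p.papp (V.map z₁) (V.map z₂) (V.map z₃)) =
      p.papp (p.papp (V.map x₁) (V.map y₁) (V.map z₁))
        (p.papp (V.map x₂) (V.map y₂) (V.map z₂))
        (p.papp (V.map x₃) (V.map y₃) (V.map z₃)) := by
  obtain ⟨q, hq⟩ := hP1.exists_map_eq_papp_π
  have := p.papp_papp_interchange hq
    (V.map (CompatibleTriples.lift x₁ x₂ x₃ h1 h2))
    (V.map (CompatibleTriples.lift y₁ y₂ y₃ h1''.symm (h6.trans h6').symm))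
    (V.map (CompatibleTriples.lift z₁ z₂ z₃ h5 (h6'.trans h6'').symm))
  simpa only [← V.map_comp, CompatibleTriples.lift_π₁, CompatibleTriples.lift_π₂,
    CompatibleTriples.lift_π₃] using this

/-- Associativity of the `V`-Mal'tsev operation on a triple `(A, s, t)` satisfying (P1). -/
theorem maltsev_assoc
    {𝔸 𝔹 : Type*} [Category 𝔸] [Category 𝔹]
    [HasFiniteLimits 𝔸] [HasFiniteLimits 𝔹]
    (V : 𝔸 ⥤ 𝔹) [V.Faithful] [PreservesFiniteLimits V]
    (p : VMaltsevOperation V)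
    {A : 𝔸} (s t : A ⟶ A) (hst : t ≫ s = t) (hts : s ≫ t = s)
    (hP1 : PropertyP1 p s t)
    {X : 𝔸} (x₁ x₂ x₃ y₁ y₂ y₃ z₁ z₂ z₃ : X ⟶ A)
    (h1 : x₁ ≫ s = x₂ ≫ s) (h1' : x₂ ≫ s = y₂ ≫ s) (h1'' : y₂ ≫ s = y₁ ≫ s)
    (h2 : x₂ ≫ t = x₃ ≫ t)
    (h3 : y₁ ≫ t = z₁ ≫ t)
    (h4 : x₃ ≫ s = y₃ ≫ s)
    (h5 : z₁ ≫ s = z₂ ≫ s)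
    (h6 : y₃ ≫ t = z₃ ≫ t) (h6' : z₃ ≫ t = y₂ ≫ t) (h6'' : y₂ ≫ t = z₂ ≫ t) :
    p.papp (p.papp (V.map x₁) (V.map x₂) (V.map x₃))
        (p.papp (V.map y₁) (V.map y₂) (V.map y₃))
        (p.papp (V.map z₁) (V.map z₂) (V.map z₃)) =
      p.papp (p.papp (V.map x₁) (V.map y₁) (V.map z₁))
        (p.papp (V.map x₂) (V.map y₂) (V.map z₂))
        (p.papp (V.map x₃) (V.map y₃) (V.map z₃)) :=
  maltsev_assoc_general V p s t hP1 x₁ x₂ x₃ y₁ y₂ y₃ z₁ z₂ z₃ h1 h1'' h2 h5 h6 h6' h6''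
end

section
/- Let X be a group and s, t : X → X group endomorphisms with s∘t = t and t∘s = s. Then the map σ : X → X defined by σ(x) = s(x) · x⁻¹ · t(x) is a group homomorphism if and only if every element of ker(s) commutes with every element of ker(t) (i.e. the commutator subgroup ⁅ker s, ker t⁆ is trivial). -/
/-!
Expanding, `σ (x * y) = s x * (s y * y⁻¹) * (x⁻¹ * t x) * t y` while
`σ x * σ y = s x * (x⁻¹ * t x) * (s y * y⁻¹) * t y`, so `σ` is multiplicative exactly when
`s y * y⁻¹` commutes with `x⁻¹ * t x` for all `x, y`. The two absorption laws make `s` and `t`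
idempotent, which puts these elements in `ker s` and `ker t`; conversely `a ∈ ker s` and
`b ∈ ker t` arise as `s a⁻¹ * a` and `b * t b⁻¹`.
-/

section

variable {X : Type*} [Group X]

def maltsevMap (s t : X →* X) (x : X) : X := s x * x⁻¹ * t x

theorem maltsevMap_mul_eq_iff_commute (s t : X →* X) (x y : X) :
    maltsevMap s t (x * y) = maltsevMap s t x * maltsevMap s t y ↔
      Commute (s y * y⁻¹) (x⁻¹ * t x) := by
  have hmul : maltsevMap s t (x * y) = s x * ((s y * y⁻¹) * (x⁻¹ * t x)) * t y := by
    simp only [maltsevMap, map_mul, mul_inv_rev]; group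
  have hmul' : maltsevMap s t x * maltsevMap s t y =
      s x * ((x⁻¹ * t x) * (s y * y⁻¹)) * t y := by
    simp only [maltsevMap]; group
  rw [hmul, hmul', mul_right_cancel_iff, mul_left_cancel_iff, commute_iff_eq]

theorem map_map_eq_of_absorb {s t : X →* X} (hst : ∀ x, s (t x) = t x)
    (hts : ∀ x, t (s x) = s x) (x : X) : s (s x) = s x := by
  rw [← hts x, hst]

theorem map_mul_inv_mem_ker {f : X →* X} (hf : ∀ x, f (f x) = f x) (x : X) :
    f x * x⁻¹ ∈ f.ker := by
  rw [MonoidHom.mem_ker, map_mul, map_inv, hf, mul_inv_cancel]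

theorem inv_mul_map_mem_ker {f : X →* X} (hf : ∀ x, f (f x) = f x) (x : X) :
    x⁻¹ * f x ∈ f.ker := by
  rw [MonoidHom.mem_ker, map_mul, map_inv, hf, inv_mul_cancel]

end

/-- For group endomorphisms `s, t : X → X` with `s∘t = t` and `t∘s = s`, the map
`σ(x) = s(x) * x⁻¹ * t(x)` (the Mal'tsev term `p⟨s, 1, t⟩`) is a group homomorphism
if and only if every element of `ker s` commutes with every element of `ker t`. -/
theorem maltsev_term_hom_iff_ker_commute
    {X : Type*} [Group X] (s t : X →* X)
    (hst : ∀ x : X, s (t x) = t x) (hts : ∀ x : X, t (s x) = s x) :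
    (∀ x y : X, s (x * y) * (x * y)⁻¹ * t (x * y) =
        (s x * x⁻¹ * t x) * (s y * y⁻¹ * t y)) ↔
      ∀ a b : X, a ∈ s.ker → b ∈ t.ker → a * b = b * a := by
  refine (forall₂_congr fun x y => maltsevMap_mul_eq_iff_commute s t x y).trans ⟨?_, ?_⟩
  · intro hcomm a b ha hb
    simpa [MonoidHom.mem_ker.mp ha, MonoidHom.mem_ker.mp hb, commute_iff_eq] using hcomm b⁻¹ a⁻¹
  · intro hker x y
    exact hker _ _ (map_mul_inv_mem_ker (map_map_eq_of_absorb hst hts) y)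
      (inv_mul_map_mem_ker (map_map_eq_of_absorb hts hst) x)
end

section
/- Let X be a group and s, t : X → X group endomorphisms such that every element of ker(s) commutes with every element of ker(t). Then for every group W and all group homomorphisms α, β, γ : W → X satisfying s∘α = s∘β and t∘β = t∘γ, the map W → X defined by w ↦ α(w) · β(w)⁻¹ · γ(w) is a group homomorphism. (This is property (P1) for the triple (X, s, t) in the category of groups.) -/
theorem mul_mul_inv_mul_mul_of_commute {G : Type*} [Group G] {x y z x' y' z' : G}
    (h : Commute (x' * y'⁻¹) (y⁻¹ * z)) :
    x * x' * (y * y')⁻¹ * (z * z') = x * y⁻¹ * z * (x' * y'⁻¹ * z') := by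
  have h' : x' * y'⁻¹ * (y⁻¹ * z) * z' = y⁻¹ * z * (x' * y'⁻¹) * z' := congrArg (· * z') h.eq
  simp only [mul_inv_rev, mul_assoc] at h' ⊢
  rw [h']

/-- Property (P1) for `(X, s, t)` in the category of groups: if `ker s` and `ker t`
commute elementwise, then for any homomorphisms `α, β, γ : W → X` with `s∘α = s∘β`
and `t∘β = t∘γ`, the pointwise Mal'tsev term `w ↦ α(w) * β(w)⁻¹ * γ(w)` is a group
homomorphism. -/
theorem P1_for_groups
    {X : Type*} [Group X] (s t : X →* X)
    (hcomm : ∀ a b : X, a ∈ s.ker → b ∈ t.ker → a * b = b * a)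
    {W : Type*} [Group W] (α β γ : W →* X)
    (hαβ : ∀ w : W, s (α w) = s (β w)) (hβγ : ∀ w : W, t (β w) = t (γ w)) :
    ∀ w w' : W, α (w * w') * (β (w * w'))⁻¹ * γ (w * w') =
      (α w * (β w)⁻¹ * γ w) * (α w' * (β w')⁻¹ * γ w') := by
  intro w w'
  have hs : α w' * (β w')⁻¹ ∈ s.ker := by
    rw [MonoidHom.mem_ker, map_mul, map_inv, hαβ, mul_inv_cancel]
  have ht : (β w)⁻¹ * γ w ∈ t.ker := (t.eq_iff).1 (hβγ w).symm
  simp only [map_mul]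
  exact mul_mul_inv_mul_mul_of_commute (hcomm _ _ hs ht)
end

section
/- Let X and B be groups, φ : B → Aut(X) an action of B on X by automorphisms, and h : X → B a group homomorphism satisfying h(φ_b(x)) = b · h(x) · b⁻¹ for all b ∈ B, x ∈ X. Let ξ₁ : X ⋊_φ B → Aut(X) be the action given by ξ₁(x', b) = φ_{h(x')·b}. Then the map m : X ⋊_{ξ₁} (X ⋊_φ B) → X ⋊_φ B defined by m(x, (x', b)) = (x · x', b) is a group homomorphism if and only if the Peiffer identity holds: x · y · x⁻¹ = φ_{h(x)}(y) for all x, y ∈ X. (This is the case s = t = ρ = λ = 1 of the description of internal bicategories in groups, recovering the notion of crossed module.) -/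
/-!
Expanding both sides, `m` respects the product of `(x₁, (x₁', b₁))` and `(x₂, (x₂', b₂))`
exactly when `φ_{h(x₁')}(y) · x₁' = x₁' · y` for `y = φ_{b₁}(x₂)`: all other factors cancel.
Since `y` ranges over all of `X` (take `b₁ = 1`), this is the Peiffer identity.
-/

namespace SemidirectProduct

variable {X B : Type*} [Group X] [Group B] {φ : B →* MulAut X}

/-- The map `m` of the statement, defined for an arbitrary action `ξ`. -/
def mulMap (ξ : X ⋊[φ] B →* MulAut X) (a : X ⋊[ξ] (X ⋊[φ] B)) : X ⋊[φ] B :=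
  ⟨a.left * a.right.left, a.right.right⟩

theorem mulMap_mul_eq_iff (ξ : X ⋊[φ] B →* MulAut X) (a b : X ⋊[ξ] (X ⋊[φ] B)) :
    mulMap ξ (a * b) = mulMap ξ a * mulMap ξ b ↔
      ξ a.right b.left * a.right.left = a.right.left * φ a.right.right b.left := by
  obtain ⟨x₁, x₁', b₁⟩ := a
  obtain ⟨x₂, x₂', b₂⟩ := b
  simp only [mulMap, SemidirectProduct.ext_iff, mul_left, mul_right, map_mul, and_true]
  rw [mul_assoc, mul_assoc, mul_right_inj, ← mul_assoc, ← mul_assoc, mul_left_inj]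

end SemidirectProduct

open SemidirectProduct in
theorem m_hom_iff_peiffer_general
    {X B : Type*} [Group X] [Group B]
    (φ : B →* MulAut X) (h : X →* B)
    (ξ₁ : X ⋊[φ] B →* MulAut X)
    (hξ₁ : ∀ g : X ⋊[φ] B, ξ₁ g = φ (h g.left * g.right)) :
    (∀ a b : X ⋊[ξ₁] (X ⋊[φ] B),
        (⟨(a * b).left * (a * b).right.left, (a * b).right.right⟩ : X ⋊[φ] B) =
          (⟨a.left * a.right.left, a.right.right⟩ : X ⋊[φ] B) *
            (⟨b.left * b.right.left, b.right.right⟩ : X ⋊[φ] B)) ↔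
      ∀ x y : X, x * y * x⁻¹ = φ (h x) y := by
  change (∀ a b, mulMap ξ₁ (a * b) = mulMap ξ₁ a * mulMap ξ₁ b) ↔ _
  simp only [mulMap_mul_eq_iff, hξ₁, map_mul, MulAut.mul_apply, mul_inv_eq_iff_eq_mul]
  constructor
  · intro hm x y
    simpa using (hm ⟨1, ⟨x, 1⟩⟩ ⟨y, 1⟩).symm
  · intro hpeiffer a b
    exact (hpeiffer _ _).symm

/-- With `ξ₁(x', b) = φ(h(x') * b)`, the multiplication map
`m : X ⋊[ξ₁] (X ⋊[φ] B) → X ⋊[φ] B`, `m(x, (x', b)) = (x * x', b)`, is a group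
homomorphism if and only if the Peiffer identity `x * y * x⁻¹ = φ(h(x))(y)` holds;
this is the case `s = t = ρ = λ = 1` of internal bicategories in groups, recovering
crossed modules. -/
theorem m_hom_iff_peiffer
    {X B : Type*} [Group X] [Group B]
    (φ : B →* MulAut X) (h : X →* B)
    (heq : ∀ (b : B) (x : X), h (φ b x) = b * h x * b⁻¹)
    (ξ₁ : X ⋊[φ] B →* MulAut X)
    (hξ₁ : ∀ g : X ⋊[φ] B, ξ₁ g = φ (h g.left * g.right)) :
    (∀ a b : X ⋊[ξ₁] (X ⋊[φ] B),
        (⟨(a * b).left * (a * b).right.left, (a * b).right.right⟩ : X ⋊[φ] B) =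
          (⟨a.left * a.right.left, a.right.right⟩ : X ⋊[φ] B) *
            (⟨b.left * b.right.left, b.right.right⟩ : X ⋊[φ] B)) ↔
      ∀ x y : X, x * y * x⁻¹ = φ (h x) y :=
  m_hom_iff_peiffer_general φ h ξ₁ hξ₁
end

section
/- Let B be a topological abelian group and z : [0,1] → B a continuous map with z(0) = 0. Define ρ₀(z) : [0,1] × [0,1] → B by ρ₀(z)(s,t) = z(t) if 2t ≤ s, and ρ₀(z)(s,t) = z(t) − z((2t−s)/(2−s)) if 2t > s. Then ρ₀(z) is continuous, and satisfies the boundary conditions ρ₀(z)(0,t) = 0, ρ₀(z)(s,0) = 0 and ρ₀(z)(s,1) = 0 for all s, t ∈ [0,1]. Moreover ρ₀ is additive: ρ₀(z + z') = ρ₀(z) + ρ₀(z') (pointwise) for continuous z, z' : [0,1] → B with z(0) = z'(0) = 0. -/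
open unitInterval

/-- Clamp a real number into the unit interval `[0,1]`. -/
noncomputable def toI (x : ℝ) : I := Set.projIcc 0 1 zero_le_one x

/-- The homotopy `ρ₀(z) : [0,1] × [0,1] → B`, defined by `ρ₀(z)(s,t) = z(t)` if
`2t ≤ s` and `z(t) − z((2t−s)/(2−s))` if `2t > s`. -/
noncomputable def rho0 {B : Type*} [AddCommGroup B] (z : I → B) : I × I → B :=
  fun q =>
    if 2 * (q.2 : ℝ) ≤ (q.1 : ℝ) then z q.2
    else z q.2 - z (toI ((2 * (q.2 : ℝ) - (q.1 : ℝ)) / (2 - (q.1 : ℝ))))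

/-- The homotopy `λ₀(z) : [0,1] × [0,1] → B`, defined by
`λ₀(z)(s,t) = z(st/(2−s)) − z(2t/(2−s))` if `2t ≤ s` and
`z(st/(2−s)) − z(s/(2−s))` if `2t > s`. -/
noncomputable def lambda0 {B : Type*} [AddCommGroup B] (z : I → B) : I × I → B :=
  fun q =>
    if 2 * (q.2 : ℝ) ≤ (q.1 : ℝ) then
      z (toI (((q.1 : ℝ) * (q.2 : ℝ)) / (2 - (q.1 : ℝ)))) -
        z (toI ((2 * (q.2 : ℝ)) / (2 - (q.1 : ℝ))))
    else
      z (toI (((q.1 : ℝ) * (q.2 : ℝ)) / (2 - (q.1 : ℝ)))) -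
        z (toI ((q.1 : ℝ) / (2 - (q.1 : ℝ))))

/-- `∂₁ρ₀(z)(t) = ρ₀(z)(1,t)`. -/
noncomputable def d1rho0 {B : Type*} [AddCommGroup B] (z : I → B) : I → B :=
  fun t => rho0 z (1, t)

/-- `∂₁λ₀(z)(t) = λ₀(z)(1,t)`. -/
noncomputable def d1lambda0 {B : Type*} [AddCommGroup B] (z : I → B) : I → B :=
  fun t => lambda0 z (1, t)

theorem toI_zero : toI 0 = 0 := Set.projIcc_left zero_le_one

theorem toI_one : toI 1 = 1 := Set.projIcc_right zero_le_one

theorem toI_coe (t : I) : toI t = t := Set.projIcc_val zero_le_one t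

@[fun_prop]
theorem continuous_toI : Continuous toI := continuous_projIcc (h := zero_le_one)

theorem two_sub_coe_pos (s : I) : 0 < (2 : ℝ) - s := by
  linarith [s.2.2]

section

variable {B : Type*} [AddCommGroup B]

theorem rho0_of_le {z : I → B} {s t : I} (h : 2 * (t : ℝ) ≤ s) : rho0 z (s, t) = z t :=
  if_pos h

theorem rho0_of_lt {z : I → B} {s t : I} (h : (s : ℝ) < 2 * t) :
    rho0 z (s, t) = z t - z (toI ((2 * t - s) / (2 - s))) :=
  if_neg h.not_ge

theorem rho0_add (z z' : I → B) : rho0 (z + z') = rho0 z + rho0 z' := by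
  ext q
  simp only [rho0, Pi.add_apply]
  split_ifs <;> abel

theorem rho0_zero_left {z : I → B} (hz0 : z 0 = 0) (t : I) : rho0 z (0, t) = 0 := by
  rcases t.2.1.eq_or_lt with ht | ht
  · rw [rho0_of_le (by simp [← ht]), show t = 0 from Subtype.ext ht.symm, hz0]
  · rw [rho0_of_lt (by simpa using ht)]
    simp [toI_coe]

theorem rho0_zero_right {z : I → B} (hz0 : z 0 = 0) (s : I) : rho0 z (s, 0) = 0 := by
  rw [rho0_of_le (by simpa using s.2.1), hz0]

theorem rho0_one_right (z : I → B) (s : I) : rho0 z (s, 1) = 0 := by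
  have hs : (s : ℝ) < 2 * (1 : I) := by push_cast; linarith [s.2.2]
  have hden := (two_sub_coe_pos s).ne'
  rw [rho0_of_lt hs]
  simp [div_self hden, toI_one]

theorem continuous_rho0 [TopologicalSpace B] [IsTopologicalAddGroup B] {z : I → B}
    (hz : Continuous z) (hz0 : z 0 = 0) : Continuous (rho0 z) := by
  have hden (q : I × I) : (2 : ℝ) - q.1 ≠ 0 := (two_sub_coe_pos q.1).ne'
  refine Continuous.if_le (by fun_prop) ?_ (by fun_prop) (by fun_prop) ?_
  · fun_prop (disch := exact hden)
  -- on the seam `2t = s` the argument `(2t - s)/(2 - s)` vanishes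
  · intro q hq
    simp [hq, toI_zero, hz0]

end

/-- `ρ₀(z)` is continuous, vanishes on the prescribed boundary, and `ρ₀` is additive. -/
theorem rho0_continuous_boundary_additive
    {B : Type*} [AddCommGroup B] [TopologicalSpace B] [IsTopologicalAddGroup B]
    (z : I → B) (hz : Continuous z) (hz0 : z 0 = 0) :
    Continuous (rho0 z) ∧
    (∀ t : I, rho0 z (0, t) = 0) ∧
    (∀ s : I, rho0 z (s, 0) = 0) ∧
    (∀ s : I, rho0 z (s, 1) = 0) ∧
    (∀ z' : I → B, Continuous z' → z' 0 = 0 →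
      ∀ q : I × I, rho0 (fun u => z u + z' u) q = rho0 z q + rho0 z' q) :=
  ⟨continuous_rho0 hz hz0, rho0_zero_left hz0, rho0_zero_right hz0, rho0_one_right z,
    fun z' _ _ q => congrFun (rho0_add z z') q⟩
end
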